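/- arXiv:2604.02253 — 5 statements merged into one kernel-verified Lean document; each statement's English description precedes it below -/
import Mathlib

section
/- Let M_z ∈ ℝ^{n_z×n_z}, W_u ∈ ℝ^{n_u×n_u}, W_z ∈ ℝ^{n_z×n_z} be symmetric matrices and z̃ ∈ ℝ^{n_z}. Write θ ∈ ℝ^{n_u(n_z+1)} as θ = (a, θ_K) with a ∈ ℝ^{n_u} and θ_K ∈ ℝ^{n_u n_z}, and let K ∈ ℝ^{n_u×n_z} be the row-wise reshaping of θ_K (K_{ij} = (θ_K)_{(i−1)n_z + j}). Define the block matrix W_θ = [[W_u, W_u ⊗ z̃ᵀM_z], [W_u ⊗ M_z z̃, W_u ⊗ (W_z + M_z z̃ z̃ᵀ M_z)]], where ⊗ is the Kronecker product. Then for all θ: θᵀ W_θ θ = (a + K M_z z̃)ᵀ W_u (a + K M_z z̃) + tr(W_u K W_z Kᵀ). -/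
open Matrix
open scoped Kronecker

/-- `Wu ⊗ vᵀ` : the Kronecker product of `Wu` with a row vector `vᵀ`
(the trivial row index is suppressed). -/
def kronRow {nu nz : ℕ} (Wu : Matrix (Fin nu) (Fin nu) ℝ) (v : Fin nz → ℝ) :
    Matrix (Fin nu) (Fin nu × Fin nz) ℝ :=
  Matrix.of fun i p => Wu i p.1 * v p.2

/-- `Wu ⊗ v` : the Kronecker product of `Wu` with a column vector `v`
(the trivial column index is suppressed). -/
def kronCol {nu nz : ℕ} (Wu : Matrix (Fin nu) (Fin nu) ℝ) (v : Fin nz → ℝ) :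
    Matrix (Fin nu × Fin nz) (Fin nu) ℝ :=
  Matrix.of fun p i => Wu p.1 i * v p.2

/-- The prior precision matrix
`Wθ = [[Wu, Wu ⊗ z̃ᵀMz], [Wu ⊗ Mz z̃, Wu ⊗ (Wz + Mz z̃ z̃ᵀ Mz)]]`,
acting on `ℝ^{nu} ⊕ ℝ^{nu × nz} ≅ ℝ^{nu(nz+1)}`. -/
noncomputable def Wtheta {nu nz : ℕ} (Wu : Matrix (Fin nu) (Fin nu) ℝ)
    (Wz Mz : Matrix (Fin nz) (Fin nz) ℝ) (zt : Fin nz → ℝ) :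
    Matrix (Fin nu ⊕ Fin nu × Fin nz) (Fin nu ⊕ Fin nu × Fin nz) ℝ :=
  Matrix.fromBlocks Wu (kronRow Wu (zt ᵥ* Mz)) (kronCol Wu (Mz *ᵥ zt))
    (Wu ⊗ₖ (Wz + Matrix.vecMulVec (Mz *ᵥ zt) (zt ᵥ* Mz)))

lemma kronRow_mulVec_aux {nu nz : ℕ} (Wu : Matrix (Fin nu) (Fin nu) ℝ) (v : Fin nz → ℝ)
    (K : Matrix (Fin nu) (Fin nz) ℝ) :
    kronRow Wu v *ᵥ (fun p => K p.1 p.2) = Wu *ᵥ (K *ᵥ v) := by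
  funext i
  simp only [kronRow, mulVec, dotProduct, Fintype.sum_prod_type, Finset.mul_sum,
    Matrix.of_apply]
  exact Finset.sum_congr rfl fun j _ => Finset.sum_congr rfl fun l _ => by ring

lemma dot_kronCol_mulVec_aux {nu nz : ℕ} (Wu : Matrix (Fin nu) (Fin nu) ℝ) (v : Fin nz → ℝ)
    (a : Fin nu → ℝ) (K : Matrix (Fin nu) (Fin nz) ℝ) :
    (fun p : Fin nu × Fin nz => K p.1 p.2) ⬝ᵥ (kronCol Wu v *ᵥ a) = (K *ᵥ v) ⬝ᵥ (Wu *ᵥ a) := by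
  simp only [kronCol, mulVec, dotProduct, Fintype.sum_prod_type, Finset.mul_sum,
    Finset.sum_mul, Matrix.of_apply]
  refine Finset.sum_congr rfl fun x _ => ?_
  rw [Finset.sum_comm]
  exact Finset.sum_congr rfl fun p _ => Finset.sum_congr rfl fun q _ => by ring

lemma dot_kron_mulVec_aux {nu nz : ℕ} (Wu : Matrix (Fin nu) (Fin nu) ℝ)
    (S : Matrix (Fin nz) (Fin nz) ℝ) (K : Matrix (Fin nu) (Fin nz) ℝ) :
    (fun p : Fin nu × Fin nz => K p.1 p.2) ⬝ᵥ ((Wu ⊗ₖ S) *ᵥ (fun p => K p.1 p.2))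
      = (Wuᵀ * K * S * Kᵀ).trace := by
  simp only [mulVec, dotProduct, Fintype.sum_prod_type, Finset.mul_sum, Finset.sum_mul,
    Matrix.trace, Matrix.diag, Matrix.mul_apply, kroneckerMap_apply, Matrix.transpose_apply]
  conv_rhs => enter [2, x, 2, x1]; rw [Finset.sum_comm]
  conv_rhs => enter [2, x]; rw [Finset.sum_comm]
  conv_rhs => rw [Finset.sum_comm]
  conv_rhs => enter [2, i, 2, x]; rw [Finset.sum_comm]
  conv_rhs => enter [2, i]; rw [Finset.sum_comm]
  refine Finset.sum_congr rfl fun i _ => Finset.sum_congr rfl fun k _ =>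
    Finset.sum_congr rfl fun x _ => Finset.sum_congr rfl fun l _ => by ring

lemma trace_vecMulVec_aux {nu nz : ℕ} (Wu : Matrix (Fin nu) (Fin nu) ℝ) (v : Fin nz → ℝ)
    (K : Matrix (Fin nu) (Fin nz) ℝ) :
    (Wu * K * vecMulVec v v * Kᵀ).trace = (K *ᵥ v) ⬝ᵥ (Wu *ᵥ (K *ᵥ v)) := by
  simp only [mulVec, dotProduct, Finset.mul_sum, Finset.sum_mul, Matrix.trace, Matrix.diag,
    Matrix.mul_apply, Matrix.transpose_apply, vecMulVec_apply]
  conv_lhs => enter [2, x, 2, x1]; rw [Finset.sum_comm]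
  conv_lhs => enter [2, x]; rw [Finset.sum_comm]
  conv_lhs => enter [2, x, 2, i]; rw [Finset.sum_comm]
  refine Finset.sum_congr rfl fun a _ => Finset.sum_congr rfl fun b _ =>
    Finset.sum_congr rfl fun c _ => Finset.sum_congr rfl fun d _ => by ring

/-- The prior quadratic form on the discrepancy parameter
`θ = (a, θ_K)` satisfies
`θᵀ Wθ θ = (a + K Mz z̃)ᵀ Wu (a + K Mz z̃) + tr(Wu K Wz Kᵀ)`,
where `K` is the row-wise reshaping of `θ_K`. -/
theorem prior_quadratic_form
    {nu nz : ℕ} (Mz Wz : Matrix (Fin nz) (Fin nz) ℝ) (Wu : Matrix (Fin nu) (Fin nu) ℝ)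
    (hMz : Mz.IsSymm) (hWz : Wz.IsSymm) (hWu : Wu.IsSymm)
    (zt : Fin nz → ℝ) (θ : Fin nu ⊕ Fin nu × Fin nz → ℝ) :
    θ ⬝ᵥ (Wtheta Wu Wz Mz zt *ᵥ θ)
      = ((fun i => θ (Sum.inl i)) + (Matrix.of fun i j => θ (Sum.inr (i, j))) *ᵥ (Mz *ᵥ zt)) ⬝ᵥ
          (Wu *ᵥ ((fun i => θ (Sum.inl i)) +
            (Matrix.of fun i j => θ (Sum.inr (i, j))) *ᵥ (Mz *ᵥ zt)))
        + (Wu * (Matrix.of fun i j => θ (Sum.inr (i, j))) * Wz *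
            (Matrix.of fun i j => θ (Sum.inr (i, j)))ᵀ).trace := by
  have hv : zt ᵥ* Mz = Mz *ᵥ zt := by
    conv_lhs => rw [← hMz]
    exact Matrix.vecMul_transpose Mz zt
  have hθ : θ = Sum.elim (fun i => θ (Sum.inl i))
      (fun p => (Matrix.of fun i j => θ (Sum.inr (i, j))) p.1 p.2) := by
    funext x; cases x <;> rfl
  set a : Fin nu → ℝ := fun i => θ (Sum.inl i) with ha
  set K : Matrix (Fin nu) (Fin nz) ℝ := Matrix.of fun i j => θ (Sum.inr (i, j)) with hK
  set v : Fin nz → ℝ := Mz *ᵥ zt with hvv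
  conv_lhs => rw [hθ]
  rw [Wtheta, hv, Matrix.fromBlocks_mulVec, sumElim_dotProduct_sumElim]
  simp only [Sum.elim_comp_inl, Sum.elim_comp_inr, ← hvv]
  rw [dotProduct_add, dotProduct_add, kronRow_mulVec_aux, dot_kronCol_mulVec_aux,
    dot_kron_mulVec_aux, hWu.eq, Matrix.mul_add, Matrix.add_mul, Matrix.trace_add,
    trace_vecMulVec_aux, Matrix.mulVec_add, dotProduct_add, add_dotProduct,
    add_dotProduct]
  have hsymm : (K *ᵥ v) ⬝ᵥ (Wu *ᵥ a) = a ⬝ᵥ (Wu *ᵥ (K *ᵥ v)) := by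
    rw [dotProduct_mulVec, dotProduct_mulVec, ← Matrix.mulVec_transpose, hWu.eq,
      dotProduct_comm, dotProduct_mulVec]
  rw [hsymm]
  ring
end

section
/- Let M_u ∈ ℝ^{n_u×n_u} and M_z ∈ ℝ^{n_z×n_z} be symmetric, z̃ ∈ ℝ^{n_z}, X ∈ ℝ^{n_u×n_u}, Λ ∈ ℝ^{n_u×n_u} diagonal with nonnegative entries, and suppose W_u = M_u X Λ Xᵀ M_u. Let W_z^{1/2} ∈ ℝ^{n_z×n_z} be a symmetric matrix and W_z = (W_z^{1/2})². Define the block matrix L = [[M_u X Λ^{1/2}, 0], [(M_u X Λ^{1/2}) ⊗ (M_z z̃), (M_u X Λ^{1/2}) ⊗ W_z^{1/2}]]. Then L Lᵀ = W_θ, where W_θ = [[W_u, W_u ⊗ z̃ᵀM_z], [W_u ⊗ M_z z̃, W_u ⊗ (W_z + M_z z̃ z̃ᵀ M_z)]]. -/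
open Matrix
open scoped Kronecker

lemma mul_kronCol_transpose {nu nz : ℕ} (A B : Matrix (Fin nu) (Fin nu) ℝ)
    (v : Fin nz → ℝ) : A * (kronCol B v)ᵀ = kronRow (A * Bᵀ) v := by
  ext i p
  simp only [kronCol, kronRow, Matrix.mul_apply, Matrix.transpose_apply, Matrix.of_apply]
  rw [Finset.sum_mul]
  exact Finset.sum_congr rfl fun x _ => by ring

lemma kronCol_mul {nu nz : ℕ} (A B : Matrix (Fin nu) (Fin nu) ℝ)
    (v : Fin nz → ℝ) : kronCol A v * Bᵀ = kronCol (A * Bᵀ) v := by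
  ext p i
  simp [kronCol, Matrix.mul_apply, Finset.sum_mul]
  exact Finset.sum_congr rfl fun x _ => by ring

lemma kronCol_mul_kronCol_transpose {nu nz : ℕ} (A B : Matrix (Fin nu) (Fin nu) ℝ)
    (v w : Fin nz → ℝ) :
    kronCol A v * (kronCol B w)ᵀ = (A * Bᵀ) ⊗ₖ Matrix.vecMulVec v w := by
  ext p q
  simp [kronCol, Matrix.mul_apply, Matrix.vecMulVec, Matrix.kroneckerMap_apply,
    Finset.sum_mul]
  exact Finset.sum_congr rfl fun x _ => by ring

/-- The block lower-triangular matrix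
`L = [[Mu X Λ^{1/2}, 0], [(Mu X Λ^{1/2}) ⊗ (Mz z̃), (Mu X Λ^{1/2}) ⊗ Wz^{1/2}]]`
satisfies `L Lᵀ = Wθ`, where `Wu = Mu X Λ Xᵀ Mu` and `Wz = (Wz^{1/2})²`. -/
theorem cholesky_factor_of_prior_precision
    {nu nz : ℕ} (Mu : Matrix (Fin nu) (Fin nu) ℝ) (Mz : Matrix (Fin nz) (Fin nz) ℝ)
    (hMu : Mu.IsSymm) (hMz : Mz.IsSymm)
    (zt : Fin nz → ℝ) (X : Matrix (Fin nu) (Fin nu) ℝ)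
    (lam : Fin nu → ℝ) (hlam : ∀ j, 0 ≤ lam j)
    (Wu : Matrix (Fin nu) (Fin nu) ℝ)
    (hWu : Wu = Mu * X * Matrix.diagonal lam * Xᵀ * Mu)
    (Wzhalf : Matrix (Fin nz) (Fin nz) ℝ) (hWzhalf : Wzhalf.IsSymm)
    (Wz : Matrix (Fin nz) (Fin nz) ℝ) (hWz : Wz = Wzhalf * Wzhalf) :
    (Matrix.fromBlocks
        (Mu * X * Matrix.diagonal fun j => Real.sqrt (lam j)) 0
        (kronCol (Mu * X * Matrix.diagonal fun j => Real.sqrt (lam j)) (Mz *ᵥ zt))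
        ((Mu * X * Matrix.diagonal fun j => Real.sqrt (lam j)) ⊗ₖ Wzhalf))
      * (Matrix.fromBlocks
        (Mu * X * Matrix.diagonal fun j => Real.sqrt (lam j)) 0
        (kronCol (Mu * X * Matrix.diagonal fun j => Real.sqrt (lam j)) (Mz *ᵥ zt))
        ((Mu * X * Matrix.diagonal fun j => Real.sqrt (lam j)) ⊗ₖ Wzhalf))ᵀ
      = Wtheta Wu Wz Mz zt := by
  set A : Matrix (Fin nu) (Fin nu) ℝ :=
    Mu * X * Matrix.diagonal fun j => Real.sqrt (lam j) with hA
  have hAAT : A * Aᵀ = Wu := by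
    rw [hA, hWu]
    rw [Matrix.transpose_mul, Matrix.transpose_mul, Matrix.diagonal_transpose, hMu.eq]
    have : (Matrix.diagonal fun j => Real.sqrt (lam j)) *
        (Matrix.diagonal fun j => Real.sqrt (lam j)) = Matrix.diagonal lam := by
      rw [Matrix.diagonal_mul_diagonal]
      exact congrArg _ (funext fun j => Real.mul_self_sqrt (hlam j))
    calc Mu * X * Matrix.diagonal (fun j => Real.sqrt (lam j)) *
        (Matrix.diagonal (fun j => Real.sqrt (lam j)) * (Xᵀ * Mu))
        = Mu * X * (Matrix.diagonal (fun j => Real.sqrt (lam j)) *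
          Matrix.diagonal (fun j => Real.sqrt (lam j))) * (Xᵀ * Mu) := by
          simp only [Matrix.mul_assoc]
      _ = Mu * X * Matrix.diagonal lam * Xᵀ * Mu := by
          rw [this]; simp only [Matrix.mul_assoc]
  have hzt : zt ᵥ* Mz = Mz *ᵥ zt := by
    nth_rewrite 1 [← hMz.eq]
    rw [Matrix.vecMul_transpose]
  rw [Matrix.fromBlocks_transpose, Matrix.fromBlocks_multiply, Wtheta]
  have h2 : A * (kronCol A (Mz *ᵥ zt))ᵀ = kronRow Wu (zt ᵥ* Mz) := by
    rw [mul_kronCol_transpose, hAAT, hzt]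
  have h3 : kronCol A (Mz *ᵥ zt) * Aᵀ = kronCol Wu (Mz *ᵥ zt) := by
    rw [kronCol_mul, hAAT]
  have h4 : kronCol A (Mz *ᵥ zt) * (kronCol A (Mz *ᵥ zt))ᵀ +
      (A ⊗ₖ Wzhalf) * (A ⊗ₖ Wzhalf)ᵀ
      = Wu ⊗ₖ (Wz + Matrix.vecMulVec (Mz *ᵥ zt) (zt ᵥ* Mz)) := by
    rw [kronCol_mul_kronCol_transpose, hAAT, ← Matrix.kroneckerMap_transpose,
      ← Matrix.mul_kronecker_mul, hAAT, hWzhalf.eq, ← hWz, hzt,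
      ← Matrix.kroneckerMap_add_right]
    · rw [add_comm]
    · exact mul_add
  simp only [Matrix.mul_zero, Matrix.zero_mul, Matrix.transpose_zero, add_zero,
    zero_add, hAAT, h2, h3, h4]
end

section
/- Let M_u, W_u ∈ ℝ^{n_u×n_u} and M_z, W_z ∈ ℝ^{n_z×n_z} be symmetric positive definite, z̃, z_1, …, z_N ∈ ℝ^{n_z}, A = (A_1; …; A_N) with A_ℓ = (I_{n_u}, I_{n_u} ⊗ z_ℓᵀM_z), and W_θ the block prior precision matrix [[W_u, W_u ⊗ z̃ᵀM_z], [W_u ⊗ M_z z̃, W_u ⊗ (W_z + M_z z̃ z̃ᵀ M_z)]]. Suppose X = (x_1 ⋯ x_{n_u}) satisfies Xᵀ M_u X = I_{n_u} and W_u x_j = λ_j M_u x_j with λ_j > 0 for all j. Let Z = (z_1 ⋯ z_N) and e ∈ ℝ^N the vector of ones. Then for every g ∈ ℝ^N and every j, setting y = Z g − (eᵀg) z̃ and s = eᵀg − yᵀ M_z W_z^{-1} M_z z̃, one has W_θ^{-1} Aᵀ (I_N ⊗ M_u)(g ⊗ x_j) = (1/λ_j) · (s x_j ; x_j ⊗ W_z^{-1}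 M_z y). In particular, if G g = μ g with μ > 0, the right generalized singular vector ψ = (1/√(μ λ_j)) (s x_j ; x_j ⊗ W_z^{-1} M_z y) satisfies W_θ^{-1} Aᵀ (I_N ⊗ M_u)(g ⊗ x_j) = √(μ/λ_j) ψ. -/
open Matrix
open scoped Kronecker

/-- The discrepancy forward operator `A(z) = (I_{nu}, I_{nu} ⊗ zᵀMz)`. -/
noncomputable def Aop {nu nz : ℕ} (Mz : Matrix (Fin nz) (Fin nz) ℝ) (z : Fin nz → ℝ) :
    Matrix (Fin nu) (Fin nu ⊕ Fin nu × Fin nz) ℝ :=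
  Matrix.of fun i q =>
    Sum.elim (fun i' => (1 : Matrix (Fin nu) (Fin nu) ℝ) i i')
      (fun p => (1 : Matrix (Fin nu) (Fin nu) ℝ) i p.1 * (z ᵥ* Mz) p.2) q

/-- The vertical stacking `A = (A_1; …; A_N)` of the forward operators `A_ℓ = A(z_ℓ)`. -/
noncomputable def Astack {nu nz N : ℕ} (Mz : Matrix (Fin nz) (Fin nz) ℝ)
    (z : Fin N → Fin nz → ℝ) :
    Matrix (Fin N × Fin nu) (Fin nu ⊕ Fin nu × Fin nz) ℝ :=
  Matrix.of fun p q => Aop Mz (z p.1) p.2 q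

/-- The data matrix `Z = (z_1 ⋯ z_N)` whose columns are the design points. -/
def Zmat {nz N : ℕ} (z : Fin N → Fin nz → ℝ) : Matrix (Fin nz) (Fin N) ℝ :=
  Matrix.of fun i ℓ => z ℓ i

/-- The Gram matrix `G = e eᵀ + (Z − z̃eᵀ)ᵀ Mz Wz⁻¹ Mz (Z − z̃eᵀ)`. -/
noncomputable def Gmat {nz N : ℕ} (Mz Wz : Matrix (Fin nz) (Fin nz) ℝ)
    (zt : Fin nz → ℝ) (z : Fin N → Fin nz → ℝ) : Matrix (Fin N) (Fin N) ℝ :=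
  Matrix.vecMulVec (fun _ => 1) (fun _ => 1) +
    (Zmat z - Matrix.of fun i (_ : Fin N) => zt i)ᵀ * (Mz * Wz⁻¹ * Mz) *
      (Zmat z - Matrix.of fun i (_ : Fin N) => zt i)

/-!
`Wθ` maps a Kronecker-structured vector `(c u ; u ⊗ w)` to one of the same shape,
`(t Wu u ; Wu u ⊗ (Wz w + t Mz z̃))` with `t = c + z̃ᵀ Mz w`, and the data vector
`Aᵀ (I_N ⊗ Mu)(g ⊗ x_j)` equals `(eᵀg Mu x_j ; Mu x_j ⊗ Mz Z g)`. Taking `u = x_j / λ_j`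
turns `Wu u` into `Mu x_j`, and the choice of `s` and `w = Wz⁻¹ Mz y` makes `t = eᵀg` and
`Wz w + eᵀg Mz z̃ = Mz Z g`. It remains to invert `Wθ`, whose block `L D Lᵀ` factorisation with
`D = diag(Wu, Wu ⊗ Wz)` gives `det Wθ = (det Wu)^(nz+1) (det Wz)^nu`.
-/

section

variable {R : Type*} [CommSemiring R] {l m n o : Type*} [Fintype m] [Fintype o]

theorem kronecker_mulVec_kronecker (A : Matrix l m R) (B : Matrix n o R) (a : m → R)
    (b : o → R) :
    (A ⊗ₖ B) *ᵥ (fun p => a p.1 * b p.2) = fun p => (A *ᵥ a) p.1 * (B *ᵥ b) p.2 := by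
  funext p
  simp only [mulVec, dotProduct, kroneckerMap_apply, Fintype.sum_prod_type, Finset.sum_mul_sum]
  exact Finset.sum_congr rfl fun _ _ => Finset.sum_congr rfl fun _ _ => by ring

theorem dotProduct_mulVec_comm_of_isSymm {S : Matrix m m R} (hS : S.IsSymm) (a b : m → R) :
    a ⬝ᵥ S *ᵥ b = b ⬝ᵥ S *ᵥ a := by
  rw [dotProduct_mulVec, ← mulVec_transpose, hS.eq, dotProduct_comm]

end

theorem Real.sqrt_div_mul_one_div_sqrt_mul {μ lam : ℝ} (hμ : 0 < μ) (hlam : 0 ≤ lam) :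
    √(μ / lam) * (1 / √(μ * lam)) = 1 / lam := by
  rw [Real.sqrt_div hμ.le, Real.sqrt_mul hμ.le, div_mul_div_comm, mul_one, mul_left_comm,
    div_mul_cancel_left₀ (Real.sqrt_pos.mpr hμ).ne', Real.mul_self_sqrt hlam, one_div]

section Wtheta

variable {nu nz N : ℕ}

theorem kronRow_mulVec (Wu : Matrix (Fin nu) (Fin nu) ℝ) (v : Fin nz → ℝ) (a : Fin nu → ℝ)
    (b : Fin nz → ℝ) :
    kronRow Wu v *ᵥ (fun p => a p.1 * b p.2) = (v ⬝ᵥ b) • (Wu *ᵥ a) := by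
  funext i
  simp only [kronRow, mulVec, dotProduct, of_apply, Pi.smul_apply, smul_eq_mul,
    Fintype.sum_prod_type, Finset.sum_mul_sum]
  rw [Finset.sum_comm]
  exact Finset.sum_congr rfl fun _ _ => Finset.sum_congr rfl fun _ _ => by ring

theorem kronCol_mulVec (Wu : Matrix (Fin nu) (Fin nu) ℝ) (v : Fin nz → ℝ) (a : Fin nu → ℝ) :
    kronCol Wu v *ᵥ a = fun p => (Wu *ᵥ a) p.1 * v p.2 := by
  funext p
  simp only [kronCol, mulVec, dotProduct, of_apply, Finset.sum_mul]
  exact Finset.sum_congr rfl fun _ _ => by ring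

theorem Wtheta_mulVec_kronecker (Wu : Matrix (Fin nu) (Fin nu) ℝ)
    (Wz Mz : Matrix (Fin nz) (Fin nz) ℝ) (zt : Fin nz → ℝ) (c : ℝ) (u : Fin nu → ℝ)
    (w : Fin nz → ℝ) :
    Wtheta Wu Wz Mz zt *ᵥ Sum.elim (c • u) (fun p => u p.1 * w p.2) =
      Sum.elim ((c + (zt ᵥ* Mz) ⬝ᵥ w) • (Wu *ᵥ u))
        (fun p => (Wu *ᵥ u) p.1 * (Wz *ᵥ w + (c + (zt ᵥ* Mz) ⬝ᵥ w) • (Mz *ᵥ zt)) p.2) := by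
  rw [Wtheta, fromBlocks_mulVec, Sum.elim_comp_inl, Sum.elim_comp_inr, kronRow_mulVec,
    kronCol_mulVec, kronecker_mulVec_kronecker, add_mulVec, vecMulVec_mulVec, mulVec_smul]
  congr 1
  · rw [add_smul]
  · funext p
    simp only [Pi.add_apply, Pi.smul_apply, smul_eq_mul, MulOpposite.smul_eq_mul_unop,
      MulOpposite.unop_op]
    ring

theorem Astack_transpose_mulVec_kronecker (Mz : Matrix (Fin nz) (Fin nz) ℝ)
    (z : Fin N → Fin nz → ℝ) (g : Fin N → ℝ) (u : Fin nu → ℝ) :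
    (Astack Mz z)ᵀ *ᵥ (fun p => g p.1 * u p.2) =
      Sum.elim ((∑ ℓ, g ℓ) • u) (fun p => u p.1 * ((Zmat z *ᵥ g) ᵥ* Mz) p.2) := by
  funext q
  rcases q with i | p
  · simp [mulVec, dotProduct, Astack, Aop, Fintype.sum_prod_type, one_apply, Finset.sum_mul]
  · simp only [mulVec, dotProduct, vecMul, transpose_apply, Astack, Aop, Zmat, of_apply,
      Sum.elim_inr, one_apply, ite_mul, one_mul, zero_mul, Finset.sum_ite_irrel,
      Finset.sum_const_zero, Fintype.sum_prod_type, Finset.sum_ite_eq', Finset.mem_univ,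
      ↓reduceIte, Finset.mul_sum, Finset.sum_mul]
    rw [Finset.sum_comm]
    exact Finset.sum_congr rfl fun _ _ => Finset.sum_congr rfl fun _ _ => by ring

theorem det_Wtheta (Wu : Matrix (Fin nu) (Fin nu) ℝ) (Wz Mz : Matrix (Fin nz) (Fin nz) ℝ)
    (zt : Fin nz → ℝ) :
    (Wtheta Wu Wz Mz zt).det = Wu.det ^ (nz + 1) * Wz.det ^ nu := by
  have hfactor : Wtheta Wu Wz Mz zt =
      fromBlocks 1 0 (kronCol 1 (Mz *ᵥ zt)) 1 * fromBlocks Wu 0 0 (Wu ⊗ₖ Wz) *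
        fromBlocks 1 (kronRow 1 (zt ᵥ* Mz)) 0 1 := by
    rw [fromBlocks_multiply, fromBlocks_multiply]
    ext (i | p) (j | q) <;>
      simp only [Wtheta, kronRow, kronCol, kronecker_add, fromBlocks_apply₁₁, fromBlocks_apply₁₂,
        fromBlocks_apply₂₁, fromBlocks_apply₂₂, Matrix.add_apply, kroneckerMap_apply,
        vecMulVec_apply, of_apply, one_apply, mul_apply, Matrix.mul_one,
        Matrix.zero_mul, Matrix.mul_zero, add_zero, zero_add, one_mul, mul_one, ite_mul,
        zero_mul, mul_ite, mul_zero, Finset.sum_ite_eq, Finset.sum_ite_eq', Finset.mem_univ,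
        ↓reduceIte] <;>
      ring
  rw [hfactor, det_mul, det_mul, det_fromBlocks_zero₁₂, det_fromBlocks_zero₂₁,
    det_fromBlocks_zero₂₁, det_kronecker]
  simp only [det_one, mul_one, one_mul, Fintype.card_fin]
  ring

theorem isUnit_det_Wtheta {Wu : Matrix (Fin nu) (Fin nu) ℝ} {Wz : Matrix (Fin nz) (Fin nz) ℝ}
    (hWu : IsUnit Wu.det) (hWz : IsUnit Wz.det) (Mz : Matrix (Fin nz) (Fin nz) ℝ)
    (zt : Fin nz → ℝ) : IsUnit (Wtheta Wu Wz Mz zt).det := by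
  rw [det_Wtheta]
  exact (hWu.pow _).mul (hWz.pow _)

theorem Wtheta_mulVec_eq_Astack_transpose_mulVec {Mu Wu : Matrix (Fin nu) (Fin nu) ℝ}
    {Mz Wz : Matrix (Fin nz) (Fin nz) ℝ} (hMz : Mz.IsSymm) (hWz : Wz.IsSymm)
    (hWz_det : IsUnit Wz.det) (zt : Fin nz → ℝ) (z : Fin N → Fin nz → ℝ) {x : Fin nu → ℝ}
    {lam : ℝ} (hx : Wu *ᵥ x = lam • (Mu *ᵥ x)) (hlam : lam ≠ 0) (g : Fin N → ℝ)
    {y : Fin nz → ℝ} {s : ℝ} (hy : y = Zmat z *ᵥ g - (∑ ℓ, g ℓ) • zt)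
    (hs : s = (∑ ℓ, g ℓ) - y ⬝ᵥ (Mz *ᵥ (Wz⁻¹ *ᵥ (Mz *ᵥ zt)))) :
    Wtheta Wu Wz Mz zt *ᵥ
        ((1 / lam) • Sum.elim (s • x) (fun p => x p.1 * (Wz⁻¹ *ᵥ (Mz *ᵥ y)) p.2)) =
      (Astack Mz z)ᵀ *ᵥ (((1 : Matrix (Fin N) (Fin N) ℝ) ⊗ₖ Mu) *ᵥ fun p => g p.1 * x p.2) := by
  set w := Wz⁻¹ *ᵥ (Mz *ᵥ y)
  have hsplit : (1 / lam) • Sum.elim (s • x) (fun p => x p.1 * w p.2) =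
      Sum.elim (s • lam⁻¹ • x) (fun p : Fin nu × Fin nz => (lam⁻¹ • x) p.1 * w p.2) := by
    funext q
    rcases q with i | p <;> simp only [Pi.smul_apply, Sum.elim_inl, Sum.elim_inr, smul_eq_mul] <;>
      ring
  have hu : Wu *ᵥ (lam⁻¹ • x) = Mu *ᵥ x := by
    rw [mulVec_smul, hx, smul_smul, inv_mul_cancel₀ hlam, one_smul]
  have hS : (Mz * Wz⁻¹ * Mz).IsSymm := by
    rw [IsSymm, transpose_mul, transpose_mul, hMz.eq, hWz.inv.eq, Matrix.mul_assoc]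
  have ht : s + (zt ᵥ* Mz) ⬝ᵥ w = ∑ ℓ, g ℓ := by
    have hcross : (zt ᵥ* Mz) ⬝ᵥ w = y ⬝ᵥ (Mz *ᵥ (Wz⁻¹ *ᵥ (Mz *ᵥ zt))) := by
      rw [← dotProduct_mulVec, mulVec_mulVec, mulVec_mulVec,
        dotProduct_mulVec_comm_of_isSymm hS, ← mulVec_mulVec, ← mulVec_mulVec]
    rw [hcross, hs, sub_add_cancel]
  have hWzw : Wz *ᵥ w + (∑ ℓ, g ℓ) • (Mz *ᵥ zt) = (Zmat z *ᵥ g) ᵥ* Mz := by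
    rw [mulVec_mulVec, mul_nonsing_inv _ hWz_det, one_mulVec, ← mulVec_smul, ← mulVec_add, hy,
      sub_add_cancel, ← mulVec_transpose, hMz.eq]
  rw [hsplit, Wtheta_mulVec_kronecker, hu, ht, hWzw, kronecker_mulVec_kronecker, one_mulVec,
    Astack_transpose_mulVec_kronecker]

end Wtheta

theorem right_singular_vector_formula_general
    {nu nz N : ℕ}
    (Mu Wu : Matrix (Fin nu) (Fin nu) ℝ) (Mz Wz : Matrix (Fin nz) (Fin nz) ℝ)
    (hWu : Wu.PosDef) (hMz : Mz.PosDef) (hWz : Wz.PosDef)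
    (zt : Fin nz → ℝ) (z : Fin N → Fin nz → ℝ)
    (x : Fin nu → Fin nu → ℝ) (lam : Fin nu → ℝ)
    (heig : ∀ j, Wu *ᵥ x j = lam j • (Mu *ᵥ x j)) (hlam : ∀ j, 0 < lam j) :
    ∀ (g : Fin N → ℝ) (j : Fin nu) (y : Fin nz → ℝ) (s : ℝ),
      y = Zmat z *ᵥ g - (∑ ℓ, g ℓ) • zt →
      s = (∑ ℓ, g ℓ) - y ⬝ᵥ (Mz *ᵥ (Wz⁻¹ *ᵥ (Mz *ᵥ zt))) →
      ((Wtheta Wu Wz Mz zt)⁻¹ *ᵥ ((Astack Mz z)ᵀ *ᵥ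
            ((((1 : Matrix (Fin N) (Fin N) ℝ) ⊗ₖ Mu)) *ᵥ fun p => g p.1 * x j p.2))
          = (1 / lam j) •
            Sum.elim (s • x j) (fun p => x j p.1 * (Wz⁻¹ *ᵥ (Mz *ᵥ y)) p.2)) ∧
      ∀ μ : ℝ, 0 < μ → Gmat Mz Wz zt z *ᵥ g = μ • g →
        (Wtheta Wu Wz Mz zt)⁻¹ *ᵥ ((Astack Mz z)ᵀ *ᵥ
            ((((1 : Matrix (Fin N) (Fin N) ℝ) ⊗ₖ Mu)) *ᵥ fun p => g p.1 * x j p.2))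
          = Real.sqrt (μ / lam j) •
            ((1 / Real.sqrt (μ * lam j)) •
              Sum.elim (s • x j) (fun p => x j p.1 * (Wz⁻¹ *ᵥ (Mz *ᵥ y)) p.2)) := by
  intro g j y s hy hs
  have hWθ := isUnit_det_Wtheta hWu.det_pos.ne'.isUnit hWz.det_pos.ne'.isUnit Mz zt
  have hsolve := Wtheta_mulVec_eq_Astack_transpose_mulVec
    (isHermitian_iff_isSymm.mp hMz.isHermitian) (isHermitian_iff_isSymm.mp hWz.isHermitian)
    hWz.det_pos.ne'.isUnit zt z (heig j) (hlam j).ne' g hy hs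
  have hformula : (Wtheta Wu Wz Mz zt)⁻¹ *ᵥ ((Astack Mz z)ᵀ *ᵥ
      ((((1 : Matrix (Fin N) (Fin N) ℝ) ⊗ₖ Mu)) *ᵥ fun p => g p.1 * x j p.2)) =
        (1 / lam j) • Sum.elim (s • x j) (fun p => x j p.1 * (Wz⁻¹ *ᵥ (Mz *ᵥ y)) p.2) := by
    rw [← hsolve, mulVec_mulVec, nonsing_inv_mul _ hWθ, one_mulVec]
  refine ⟨hformula, fun μ hμ _ => ?_⟩
  rw [hformula, smul_smul, Real.sqrt_div_mul_one_div_sqrt_mul hμ (hlam j).le]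

/-- Action of `Wθ⁻¹ Aᵀ (I_N ⊗ Mu)` on the Kronecker vector `g ⊗ x_j`:
`Wθ⁻¹ Aᵀ (I_N ⊗ Mu)(g ⊗ x_j) = (1/λ_j) (s x_j ; x_j ⊗ Wz⁻¹ Mz y)` where
`y = Z g − (eᵀg) z̃` and `s = eᵀg − yᵀ Mz Wz⁻¹ Mz z̃`.  In particular, if `G g = μ g`
with `μ > 0`, this equals `√(μ/λ_j) ψ` for the right generalized singular vector
`ψ = (1/√(μ λ_j)) (s x_j ; x_j ⊗ Wz⁻¹ Mz y)`. -/
theorem right_singular_vector_formula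
    {nu nz N : ℕ}
    (Mu Wu : Matrix (Fin nu) (Fin nu) ℝ) (Mz Wz : Matrix (Fin nz) (Fin nz) ℝ)
    (hMu : Mu.PosDef) (hWu : Wu.PosDef) (hMz : Mz.PosDef) (hWz : Wz.PosDef)
    (zt : Fin nz → ℝ) (z : Fin N → Fin nz → ℝ)
    (x : Fin nu → Fin nu → ℝ) (lam : Fin nu → ℝ)
    (hX : (Matrix.of fun i j => x j i)ᵀ * Mu * (Matrix.of fun i j => x j i) = 1)
    (heig : ∀ j, Wu *ᵥ x j = lam j • (Mu *ᵥ x j)) (hlam : ∀ j, 0 < lam j) :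
    ∀ (g : Fin N → ℝ) (j : Fin nu) (y : Fin nz → ℝ) (s : ℝ),
      y = Zmat z *ᵥ g - (∑ ℓ, g ℓ) • zt →
      s = (∑ ℓ, g ℓ) - y ⬝ᵥ (Mz *ᵥ (Wz⁻¹ *ᵥ (Mz *ᵥ zt))) →
      ((Wtheta Wu Wz Mz zt)⁻¹ *ᵥ ((Astack Mz z)ᵀ *ᵥ
            ((((1 : Matrix (Fin N) (Fin N) ℝ) ⊗ₖ Mu)) *ᵥ fun p => g p.1 * x j p.2))
          = (1 / lam j) •
            Sum.elim (s • x j) (fun p => x j p.1 * (Wz⁻¹ *ᵥ (Mz *ᵥ y)) p.2)) ∧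
      ∀ μ : ℝ, 0 < μ → Gmat Mz Wz zt z *ᵥ g = μ • g →
        (Wtheta Wu Wz Mz zt)⁻¹ *ᵥ ((Astack Mz z)ᵀ *ᵥ
            ((((1 : Matrix (Fin N) (Fin N) ℝ) ⊗ₖ Mu)) *ᵥ fun p => g p.1 * x j p.2))
          = Real.sqrt (μ / lam j) •
            ((1 / Real.sqrt (μ * lam j)) •
              Sum.elim (s • x j) (fun p => x j p.1 * (Wz⁻¹ *ᵥ (Mz *ᵥ y)) p.2)) :=
  right_singular_vector_formula_general Mu Wu Mz Wz hWu hMz hWz zt z x lam heig hlam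
end

section
/- Let W_θ ∈ ℝ^{n_θ×n_θ} be symmetric positive definite, M_u ∈ ℝ^{n_u×n_u} symmetric positive definite, α_d > 0, W_d = (1/α_d)(I_N ⊗ M_u), and A ∈ ℝ^{n_u N×n_θ}. Suppose A = Ξ Φ Ψᵀ W_θ with Ξᵀ (I_N ⊗ M_u) Ξ = I_{n_u N}, Ψᵀ W_θ Ψ = I_{n_u N}, and Φ ∈ ℝ^{n_u N×n_u N} diagonal with nonnegative entries whose squares are indexed as μ_i/λ_j (i = 1,…,N; j = 1,…,n_u) with μ_i ≥ 0 and λ_j > 0. Then the posterior covariance matrix satisfies Σ_θ := (W_θ + Aᵀ W_d A)^{-1} = W_θ^{-1} − Ψ D Ψᵀ, where D is the diagonal matrix with entries μ_i/(μ_i + α_d λ_j). -/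
open Matrix
open scoped Kronecker

/-!
The generalized SVD turns the data-misfit term into `Aᵀ W_d A = W_θ Ψ C Ψᵀ W_θ` with
`C = α_d⁻¹ Φᵀ Φ` diagonal with entries `μ_i / (α_d λ_j)`. Since `Ψᵀ W_θ Ψ = 1`, multiplying
`W_θ + W_θ Ψ C Ψᵀ W_θ` by `W_θ⁻¹ - Ψ D Ψᵀ` leaves `1 + W_θ Ψ ((1 + C)(1 - D) - 1) Ψᵀ`, and
`D = C (1 + C)⁻¹` is exactly the diagonal making `(1 + C)(1 - D) = 1`.
-/

namespace Matrix

section Woodbury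

variable {m n : Type*} [Fintype m] [Fintype n] [DecidableEq m] [DecidableEq n]
  {α : Type*} [CommRing α]

theorem inv_add_mul_mul_mul_eq_inv_sub {W : Matrix n n α} (hW : IsUnit W.det)
    {U : Matrix n m α} {V : Matrix m n α} (hVWU : V * W * U = 1)
    {C D : Matrix m m α} (hCD : (1 + C) * (1 - D) = 1) :
    (W + W * U * C * V * W)⁻¹ = W⁻¹ - U * D * V := by
  apply inv_eq_right_inv
  have hCD₀ : C - D - C * D = 0 := by
    rw [← sub_eq_zero.mpr hCD]
    noncomm_ring
  calc (W + W * U * C * V * W) * (W⁻¹ - U * D * V)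
      = W * W⁻¹ - W * U * D * V + W * U * C * V * (W * W⁻¹)
          - W * U * C * (V * W * U) * D * V := by
        simp only [Matrix.mul_assoc, Matrix.add_mul, Matrix.mul_sub]
        abel
    _ = 1 + W * U * (C - D - C * D) * V := by
        rw [mul_nonsing_inv _ hW, hVWU]
        simp only [Matrix.mul_assoc, Matrix.mul_sub, Matrix.sub_mul, Matrix.mul_one]
        abel
    _ = 1 := by rw [hCD₀, Matrix.mul_zero, Matrix.zero_mul, add_zero]

theorem one_add_diagonal_mul_one_sub_diagonal {c d : n → α}
    (h : ∀ i, (1 + c i) * (1 - d i) = 1) :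
    (1 + diagonal c) * (1 - diagonal d) = 1 := by
  rw [← diagonal_one, diagonal_add, diagonal_sub, diagonal_mul_diagonal]
  exact congrArg diagonal (funext h)

end Woodbury

theorem transpose_mul_mul_of_gsvd {k m n p α : Type*} [Fintype k] [Fintype m] [Fintype n]
    [Fintype p] [DecidableEq m] [CommRing α] {A : Matrix k n α} {M : Matrix k k α}
    {Ξ : Matrix k m α} {Φ : Matrix m p α} {Ψ : Matrix n p α} {W : Matrix n n α}
    (hA : A = Ξ * Φ * Ψᵀ * W) (hΞ : Ξᵀ * M * Ξ = 1) :
    Aᵀ * M * A = Wᵀ * Ψ * (Φᵀ * Φ) * Ψᵀ * W := by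
  calc Aᵀ * M * A = Wᵀ * Ψ * Φᵀ * (Ξᵀ * M * Ξ) * Φ * Ψᵀ * W := by
        simp only [hA, transpose_mul, transpose_transpose, Matrix.mul_assoc]
    _ = _ := by rw [hΞ]; simp only [Matrix.mul_one, Matrix.mul_assoc]

theorem diagonal_sqrt_transpose_mul_self {n : Type*} [Fintype n] [DecidableEq n]
    {f : n → ℝ} (hf : ∀ i, 0 ≤ f i) :
    (diagonal fun i => √(f i))ᵀ * diagonal (fun i => √(f i)) = diagonal f := by
  rw [diagonal_transpose, diagonal_mul_diagonal]
  exact congrArg diagonal (funext fun i => Real.mul_self_sqrt (hf i))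

end Matrix

theorem one_add_inv_mul_div_mul_one_sub_div {K : Type*} [Field K] {a m l : K} (ha : a ≠ 0)
    (hl : l ≠ 0) (hml : m + a * l ≠ 0) : (1 + a⁻¹ * (m / l)) * (1 - m / (m + a * l)) = 1 := by
  field_simp
  ring

theorem posterior_covariance_formula_general
    {nθ N nu : ℕ}
    (Wθ : Matrix (Fin nθ) (Fin nθ) ℝ) (hWθ : Wθ.PosDef)
    (Mu : Matrix (Fin nu) (Fin nu) ℝ)
    (αd : ℝ) (hαd : 0 < αd)
    (Wd : Matrix (Fin N × Fin nu) (Fin N × Fin nu) ℝ)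
    (hWd : Wd = (1 / αd) • ((1 : Matrix (Fin N) (Fin N) ℝ) ⊗ₖ Mu))
    (A : Matrix (Fin N × Fin nu) (Fin nθ) ℝ)
    (Ξ : Matrix (Fin N × Fin nu) (Fin N × Fin nu) ℝ)
    (Ψ : Matrix (Fin nθ) (Fin N × Fin nu) ℝ)
    (μ : Fin N → ℝ) (lam : Fin nu → ℝ)
    (hμ : ∀ i, 0 ≤ μ i) (hlam : ∀ j, 0 < lam j)
    (hGSVD : A = Ξ * Matrix.diagonal
        (fun p : Fin N × Fin nu => Real.sqrt (μ p.1 / lam p.2)) * Ψᵀ * Wθ)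
    (hΞ : Ξᵀ * ((1 : Matrix (Fin N) (Fin N) ℝ) ⊗ₖ Mu) * Ξ = 1)
    (hΨ : Ψᵀ * Wθ * Ψ = 1) :
    (Wθ + Aᵀ * Wd * A)⁻¹
      = Wθ⁻¹ - Ψ * Matrix.diagonal
          (fun p : Fin N × Fin nu => μ p.1 / (μ p.1 + αd * lam p.2)) * Ψᵀ := by
  have hWθt : Wθᵀ = Wθ := hWθ.isHermitian.eq
  have hmisfit : Aᵀ * Wd * A
      = Wθ * Ψ * (αd⁻¹ • diagonal fun p : Fin N × Fin nu => μ p.1 / lam p.2) * Ψᵀ * Wθ := by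
    rw [hWd, one_div, Matrix.mul_smul, Matrix.smul_mul, transpose_mul_mul_of_gsvd hGSVD hΞ,
      hWθt, diagonal_sqrt_transpose_mul_self fun p : Fin N × Fin nu =>
        div_nonneg (hμ p.1) (hlam p.2).le]
    simp only [Matrix.mul_smul, Matrix.smul_mul]
  rw [hmisfit, ← diagonal_smul]
  exact inv_add_mul_mul_mul_eq_inv_sub (isUnit_iff_ne_zero.mpr hWθ.det_pos.ne') hΨ
    (one_add_diagonal_mul_one_sub_diagonal fun p =>
      one_add_inv_mul_div_mul_one_sub_div hαd.ne' (hlam p.2).ne'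
        (add_pos_of_nonneg_of_pos (hμ p.1) (mul_pos hαd (hlam p.2))).ne')

/-- With prior precision `Wθ` (SPD), noise precision
`Wd = (1/α_d)(I_N ⊗ Mu)`, and generalized singular value decomposition
`A = Ξ Φ Ψᵀ Wθ` (`Ξ` being `(I_N ⊗ Mu)`-orthonormal, `Ψ` being `Wθ`-orthonormal,
squared singular values `μ_i/λ_j`), the posterior covariance satisfies
`Σθ = (Wθ + Aᵀ Wd A)⁻¹ = Wθ⁻¹ − Ψ D Ψᵀ`, where `D` is diagonal with entries
`μ_i/(μ_i + α_d λ_j)`. -/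
theorem posterior_covariance_formula
    {nθ N nu : ℕ}
    (Wθ : Matrix (Fin nθ) (Fin nθ) ℝ) (hWθ : Wθ.PosDef)
    (Mu : Matrix (Fin nu) (Fin nu) ℝ) (hMu : Mu.PosDef)
    (αd : ℝ) (hαd : 0 < αd)
    (Wd : Matrix (Fin N × Fin nu) (Fin N × Fin nu) ℝ)
    (hWd : Wd = (1 / αd) • ((1 : Matrix (Fin N) (Fin N) ℝ) ⊗ₖ Mu))
    (A : Matrix (Fin N × Fin nu) (Fin nθ) ℝ)
    (Ξ : Matrix (Fin N × Fin nu) (Fin N × Fin nu) ℝ)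
    (Ψ : Matrix (Fin nθ) (Fin N × Fin nu) ℝ)
    (μ : Fin N → ℝ) (lam : Fin nu → ℝ)
    (hμ : ∀ i, 0 ≤ μ i) (hlam : ∀ j, 0 < lam j)
    (hGSVD : A = Ξ * Matrix.diagonal
        (fun p : Fin N × Fin nu => Real.sqrt (μ p.1 / lam p.2)) * Ψᵀ * Wθ)
    (hΞ : Ξᵀ * ((1 : Matrix (Fin N) (Fin N) ℝ) ⊗ₖ Mu) * Ξ = 1)
    (hΨ : Ψᵀ * Wθ * Ψ = 1) :
    (Wθ + Aᵀ * Wd * A)⁻¹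
      = Wθ⁻¹ - Ψ * Matrix.diagonal
          (fun p : Fin N × Fin nu => μ p.1 / (μ p.1 + αd * lam p.2)) * Ψᵀ :=
  posterior_covariance_formula_general Wθ hWθ Mu αd hαd Wd hWd A Ξ Ψ μ lam hμ hlam hGSVD hΞ hΨ
end

section
/- Let M_u ∈ ℝ^{n_u×n_u}, M_z, W_z ∈ ℝ^{n_z×n_z} be symmetric with W_z invertible, α_d > 0, and for i = 1,…,N and j = 1,…,n_u let μ_i > 0, λ_j > 0, s_i ∈ ℝ, y_i ∈ ℝ^{n_z}, and x_j ∈ ℝ^{n_u}. Define ψ_{i,j} = (1/√(μ_i λ_j)) (s_i x_j ; x_j ⊗ W_z^{-1} M_z y_i) ∈ ℝ^{n_u(n_z+1)}, let Ψ be the matrix whose columns are the ψ_{i,j}, let D be the diagonal matrix with corresponding entries μ_i/(μ_i + α_d λ_j), and for z ∈ ℝ^{n_z} let A(z) = (I_{n_u}, I_{n_u} ⊗ zᵀM_z). Then tr(A(z) Ψ D Ψᵀ A(z)ᵀ M_u) = Σ_{i=1}^{N} Σ_{j=1}^{n_u} (x_jᵀ M_u x_j)/(λ_j (μ_i + α_d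 λ_j)) · (s_i + zᵀ M_z W_z^{-1} M_z y_i)². -/
/-!
Since `A(z)` contracts the Kronecker block of a vector against `zᵀM_z`, it sends `ψ_{i,j}` to the
multiple `(s_i + zᵀM_z W_z⁻¹ M_z y_i) / √(μ_i λ_j)` of `x_j`. Hence `Φ = A(z)Ψ` has these
multiples as columns, and `tr(Φ D Φᵀ M_u)` is the `D`-weighted sum of the `M_u`-quadratic forms
of the columns of `Φ`; the weight `μ_i / (μ_i + α_d λ_j)` times `1 / (μ_i λ_j)` is the coefficient.
-/

open Matrix

theorem Matrix.trace_mul_diagonal_mul_transpose_mul {m p R : Type*} [Fintype m] [Fintype p]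
    [DecidableEq p] [CommSemiring R] (M : Matrix m p R) (d : p → R) (Q : Matrix m m R) :
    (M * diagonal d * Mᵀ * Q).trace = ∑ k, d k * (Mᵀ k ⬝ᵥ (Q *ᵥ Mᵀ k)) := by
  rw [Matrix.mul_assoc, trace_mul_comm, ← Matrix.mul_assoc]
  simp only [trace, diag, mul_apply, transpose_apply, diagonal_apply, mul_ite, mul_zero,
    Finset.sum_ite_eq', Finset.mem_univ, if_true, dotProduct, mulVec, Finset.mul_sum,
    Finset.sum_mul]
  refine Finset.sum_congr rfl fun k _ => ?_
  rw [Finset.sum_comm]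
  exact Finset.sum_congr rfl fun _ _ => Finset.sum_congr rfl fun _ _ => by ring

theorem Matrix.smul_dotProduct_mulVec_smul {n R : Type*} [Fintype n] [CommSemiring R]
    (a : R) (v : n → R) (Q : Matrix n n R) :
    (a • v) ⬝ᵥ (Q *ᵥ (a • v)) = a ^ 2 * (v ⬝ᵥ (Q *ᵥ v)) := by
  rw [mulVec_smul, smul_dotProduct, dotProduct_smul, smul_eq_mul, smul_eq_mul, sq, mul_assoc]

theorem Aop_mulVec_sumElim {nu nz : ℕ} (Mz : Matrix (Fin nz) (Fin nz) ℝ) (z : Fin nz → ℝ)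
    (u v : Fin nu → ℝ) (w : Fin nz → ℝ) :
    Aop Mz z *ᵥ Sum.elim u (fun p => v p.1 * w p.2) = u + (z ⬝ᵥ (Mz *ᵥ w)) • v := by
  rw [dotProduct_mulVec]
  ext i
  simp only [mulVec, dotProduct, Aop, one_apply, ite_mul, one_mul, zero_mul, of_apply,
    Fintype.sum_sum_type, Sum.elim_inl, Finset.sum_ite_eq, Finset.mem_univ, ↓reduceIte,
    Sum.elim_inr, Fintype.sum_prod_type, Finset.sum_ite_irrel, Finset.sum_const_zero,
    Pi.add_apply, Pi.smul_apply, smul_eq_mul, add_right_inj]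
  rw [Finset.sum_mul]
  exact Finset.sum_congr rfl fun _ _ => by ring

theorem div_add_mul_mul_one_div_sqrt_mul_sq {μ l : ℝ} (hμ : 0 < μ) (hl : 0 ≤ l) (α : ℝ) :
    μ / (μ + α * l) * (1 / √(μ * l)) ^ 2 = 1 / (l * (μ + α * l)) := by
  rw [div_pow, Real.sq_sqrt (by positivity)]
  field_simp

theorem oed_criterion_closed_form_general
    {nu nz N : ℕ}
    (Mu : Matrix (Fin nu) (Fin nu) ℝ) (Mz Wz : Matrix (Fin nz) (Fin nz) ℝ)
    (αd : ℝ)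
    (μ : Fin N → ℝ) (lam : Fin nu → ℝ) (hμ : ∀ i, 0 < μ i) (hlam : ∀ j, 0 < lam j)
    (s : Fin N → ℝ) (y : Fin N → Fin nz → ℝ) (x : Fin nu → Fin nu → ℝ)
    (ψ : Fin N → Fin nu → (Fin nu ⊕ Fin nu × Fin nz) → ℝ)
    (hψ : ∀ i j, ψ i j = (1 / Real.sqrt (μ i * lam j)) •
      Sum.elim (s i • x j) (fun p => x j p.1 * (Wz⁻¹ *ᵥ (Mz *ᵥ y i)) p.2))
    (Ψmat : Matrix (Fin nu ⊕ Fin nu × Fin nz) (Fin N × Fin nu) ℝ)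
    (hΨmat : Ψmat = Matrix.of fun q p => ψ p.1 p.2 q)
    (z : Fin nz → ℝ) :
    (Aop (nu := nu) Mz z * Ψmat *
        Matrix.diagonal (fun p : Fin N × Fin nu => μ p.1 / (μ p.1 + αd * lam p.2)) *
        Ψmatᵀ * (Aop (nu := nu) Mz z)ᵀ * Mu).trace
      = ∑ i : Fin N, ∑ j : Fin nu,
          (x j ⬝ᵥ (Mu *ᵥ x j)) / (lam j * (μ i + αd * lam j)) *
            (s i + z ⬝ᵥ (Mz *ᵥ (Wz⁻¹ *ᵥ (Mz *ᵥ y i)))) ^ 2 := by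
  have hcol : ∀ i j, (Aop (nu := nu) Mz z * Ψmat)ᵀ (i, j) =
      (1 / √(μ i * lam j) * (s i + z ⬝ᵥ (Mz *ᵥ (Wz⁻¹ *ᵥ (Mz *ᵥ y i))))) • x j := by
    intro i j
    rw [hΨmat]
    change Aop Mz z *ᵥ ψ i j = _
    rw [hψ, mulVec_smul, Aop_mulVec_sumElim, ← add_smul, smul_smul]
  rw [Matrix.mul_assoc (_ * _ * _) Ψmatᵀ, ← transpose_mul, trace_mul_diagonal_mul_transpose_mul,
    Fintype.sum_prod_type]
  refine Finset.sum_congr rfl fun i _ => Finset.sum_congr rfl fun j _ => ?_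
  rw [hcol, smul_dotProduct_mulVec_smul, mul_pow, ← mul_assoc, ← mul_assoc,
    div_add_mul_mul_one_div_sqrt_mul_sq (hμ i) (hlam j).le]
  ring

/-- Closed form for the design-dependent part of the OED
criterion:
`tr(A(z) Ψ D Ψᵀ A(z)ᵀ Mu) = Σ_{i,j} (x_jᵀ Mu x_j)/(λ_j (μ_i + α_d λ_j)) (s_i + zᵀ Mz Wz⁻¹ Mz y_i)²`. -/
theorem oed_criterion_closed_form
    {nu nz N : ℕ}
    (Mu : Matrix (Fin nu) (Fin nu) ℝ) (Mz Wz : Matrix (Fin nz) (Fin nz) ℝ)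
    (hMu : Mu.IsSymm) (hMz : Mz.IsSymm) (hWz : Wz.IsSymm) (hWzinv : IsUnit Wz.det)
    (αd : ℝ) (hαd : 0 < αd)
    (μ : Fin N → ℝ) (lam : Fin nu → ℝ) (hμ : ∀ i, 0 < μ i) (hlam : ∀ j, 0 < lam j)
    (s : Fin N → ℝ) (y : Fin N → Fin nz → ℝ) (x : Fin nu → Fin nu → ℝ)
    (ψ : Fin N → Fin nu → (Fin nu ⊕ Fin nu × Fin nz) → ℝ)
    (hψ : ∀ i j, ψ i j = (1 / Real.sqrt (μ i * lam j)) •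
      Sum.elim (s i • x j) (fun p => x j p.1 * (Wz⁻¹ *ᵥ (Mz *ᵥ y i)) p.2))
    (Ψmat : Matrix (Fin nu ⊕ Fin nu × Fin nz) (Fin N × Fin nu) ℝ)
    (hΨmat : Ψmat = Matrix.of fun q p => ψ p.1 p.2 q)
    (z : Fin nz → ℝ) :
    (Aop (nu := nu) Mz z * Ψmat *
        Matrix.diagonal (fun p : Fin N × Fin nu => μ p.1 / (μ p.1 + αd * lam p.2)) *
        Ψmatᵀ * (Aop (nu := nu) Mz z)ᵀ * Mu).trace
      = ∑ i : Fin N, ∑ j : Fin nu,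
          (x j ⬝ᵥ (Mu *ᵥ x j)) / (lam j * (μ i + αd * lam j)) *
            (s i + z ⬝ᵥ (Mz *ᵥ (Wz⁻¹ *ᵥ (Mz *ᵥ y i)))) ^ 2 :=
  oed_criterion_closed_form_general Mu Mz Wz αd μ lam hμ hlam s y x ψ hψ Ψmat hΨmat z
end
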